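/- Let A be an alphabet with exactly 3 letters. Then Ben has a winning strategy for the erase-repetition game over A: there is a Ben strategy φ such that for every Ann strategy ψ, every word arising in the play between ψ and φ has length at most 6. -/
import Mathlib


open scoped Classical

/-- If the word `w` has a suffix that is a square `u ++ u` (with `u` nonempty), erase
the second half `u` of the shortest such square suffix; otherwise do nothing. -/
noncomputable def eraseStep {A : Type*} (w : List A) : List A :=
  if h : ∃ n, 0 < n ∧ ∃ u : List A, u.length = n ∧ (u ++ u) <:+ w then
    w.take (w.length - Nat.find h)
  else w

/-- Repeatedly erase the second half of the shortest square suffix, until no suffix of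
the word is a square. -/
noncomputable def reduce {A : Type*} (w : List A) : List A := eraseStep^[w.length] w

/-- The play of the erase-repetition game over the alphabet `A`: Ann (strategy `ψ`)
and Ben (strategy `φ`) alternately append a letter, Ann moving first; after each move
the word is reduced by repeatedly erasing the second half of the shortest square
suffix. -/
noncomputable def playER {A : Type*} (ψ φ : List A → A) : ℕ → List A
  | 0 => []
  | k + 1 =>
      let w := playER ψ φ k
      reduce (w ++ [if Even k then ψ w else φ w])

/-! ### Auxiliary material -/

section Aux

lemma find_congr_aux {p q : ℕ → Prop} [DecidablePred p] [DecidablePred q]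
    (hp : ∃ n, p n) (hq : ∃ n, q n) (h : ∀ n, p n ↔ q n) :
    Nat.find hp = Nat.find hq :=
  le_antisymm (Nat.find_min' hp ((h _).2 (Nat.find_spec hq)))
    (Nat.find_min' hq ((h _).1 (Nat.find_spec hp)))

variable {A B : Type*}

lemma P_map (e : A ↪ B) (w : List A) (n : ℕ)
    (h : 0 < n ∧ ∃ u : List A, u.length = n ∧ u ++ u <:+ w) :
    0 < n ∧ ∃ u : List B, u.length = n ∧ u ++ u <:+ w.map e := by
  obtain ⟨hn, u, hl, t, ht⟩ := h
  exact ⟨hn, u.map e, by simp [hl], t.map e, by rw [← ht]; simp⟩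

lemma P_map_iff (e : A ≃ B) (w : List A) (n : ℕ) :
    (0 < n ∧ ∃ u : List A, u.length = n ∧ u ++ u <:+ w) ↔
      (0 < n ∧ ∃ u : List B, u.length = n ∧ u ++ u <:+ w.map e) := by
  constructor
  · exact P_map e.toEmbedding w n
  · intro h
    have := P_map e.symm.toEmbedding (w.map e) n h
    simpa [List.map_map] using this

lemma eraseStep_map (e : A ≃ B) (w : List A) :
    eraseStep (w.map e) = (eraseStep w).map e := by
  unfold eraseStep
  by_cases h : ∃ n, 0 < n ∧ ∃ u : List A, u.length = n ∧ u ++ u <:+ w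
  · have h' : ∃ n, 0 < n ∧ ∃ u : List B, u.length = n ∧ u ++ u <:+ w.map e := by
      obtain ⟨n, hn⟩ := h
      exact ⟨n, (P_map_iff e w n).1 hn⟩
    rw [dif_pos h, dif_pos h']
    have hfind : Nat.find h' = Nat.find h :=
      find_congr_aux h' h (fun n => (P_map_iff e w n).symm)
    simp [hfind, List.map_take]
  · have h' : ¬ ∃ n, 0 < n ∧ ∃ u : List B, u.length = n ∧ u ++ u <:+ w.map e := by
      intro hc
      obtain ⟨n, hn⟩ := hc
      exact h ⟨n, (P_map_iff e w n).2 hn⟩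
    rw [dif_neg h, dif_neg h']

lemma iterate_eraseStep_map (e : A ≃ B) (n : ℕ) (w : List A) :
    eraseStep^[n] (w.map e) = (eraseStep^[n] w).map e := by
  induction n generalizing w with
  | zero => rfl
  | succ n ih => rw [Function.iterate_succ_apply, Function.iterate_succ_apply,
      eraseStep_map, ih]

lemma reduce_map (e : A ≃ B) (w : List A) :
    reduce (w.map e) = (reduce w).map e := by
  unfold reduce
  rw [List.length_map, iterate_eraseStep_map]

lemma playER_succ (ψ φ : List A → A) (k : ℕ) :
    playER ψ φ (k + 1) =
      reduce (playER ψ φ k ++ [if Even k then ψ (playER ψ φ k) else φ (playER ψ φ k)]) := by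
  rfl

lemma playER_map (e : A ≃ B) (ψ φ : List A → A) (k : ℕ) :
    (playER ψ φ k).map e =
      playER (fun v => e (ψ (v.map e.symm))) (fun v => e (φ (v.map e.symm))) k := by
  induction k with
  | zero => rfl
  | succ k ih =>
    rw [playER_succ, playER_succ, ← ih, ← reduce_map]
    congr 1
    simp [List.map_map, apply_ite e]

end Aux

/-! ### Computable model over `Fin 3` -/

def sqB (w : List (Fin 3)) (n : ℕ) : Bool :=
  decide (0 < n) && decide (2 * n ≤ w.length) &&
    (w.drop (w.length - 2 * n) == w.drop (w.length - n) ++ w.drop (w.length - n))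

lemma sqB_iff (w : List (Fin 3)) (n : ℕ) :
    sqB w n = true ↔ (0 < n ∧ 2 * n ≤ w.length ∧
      w.drop (w.length - 2 * n) = w.drop (w.length - n) ++ w.drop (w.length - n)) := by
  simp [sqB, and_assoc]

lemma P_iff_sqB (w : List (Fin 3)) (n : ℕ) :
    (0 < n ∧ ∃ u : List (Fin 3), u.length = n ∧ u ++ u <:+ w) ↔ sqB w n = true := by
  rw [sqB_iff]
  constructor
  · rintro ⟨hn, u, hl, t, rfl⟩
    have hlen : (t ++ (u ++ u)).length = t.length + 2 * n := by
      simp [hl]; omega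
    have h2 : 2 * n ≤ (t ++ (u ++ u)).length := by omega
    have e1 : (t ++ (u ++ u)).drop ((t ++ (u ++ u)).length - 2 * n) = u ++ u := by
      have : (t ++ (u ++ u)).length - 2 * n = t.length := by omega
      rw [this, List.drop_left]
    have e2 : (t ++ (u ++ u)).drop ((t ++ (u ++ u)).length - n) = u := by
      have h3 : t ++ (u ++ u) = (t ++ u) ++ u := by simp
      have h4 : (t ++ (u ++ u)).length - n = (t ++ u).length := by
        simp [hl] at hlen ⊢; omega
      rw [h4, h3, List.drop_left]
    exact ⟨hn, h2, by rw [e1, e2]⟩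
  · rintro ⟨hn, hle, he⟩
    refine ⟨hn, w.drop (w.length - n), ?_, ?_⟩
    · rw [List.length_drop]; omega
    · rw [← he]; exact List.drop_suffix _ _

def findMin (p : ℕ → Bool) : ℕ → ℕ → Option ℕ
  | 0, _ => none
  | fuel + 1, n => if p n then some n else findMin p fuel (n + 1)

lemma findMin_none (p : ℕ → Bool) :
    ∀ fuel n, findMin p fuel n = none → ∀ k, n ≤ k → k < n + fuel → p k = false := by
  intro fuel
  induction fuel with
  | zero => intro n _ k h1 h2; omega
  | succ fuel ih =>
    intro n hfm k h1 h2
    unfold findMin at hfm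
    by_cases hp : p n
    · simp [hp] at hfm
    · rw [if_neg hp] at hfm
      rcases eq_or_lt_of_le h1 with rfl | h1'
      · exact Bool.eq_false_iff.2 hp
      · exact ih (n + 1) hfm k h1' (by omega)

lemma findMin_some (p : ℕ → Bool) :
    ∀ fuel m n, findMin p fuel m = some n →
      p n = true ∧ ∀ k, m ≤ k → k < n → p k = false := by
  intro fuel
  induction fuel with
  | zero => intro m n h; simp [findMin] at h
  | succ fuel ih =>
    intro m n hfm
    unfold findMin at hfm
    by_cases hp : p m
    · rw [if_pos hp] at hfm
      obtain rfl : m = n := by simpa using hfm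
      exact ⟨hp, fun k h1 h2 => by omega⟩
    · rw [if_neg hp] at hfm
      obtain ⟨h1, h2⟩ := ih (m + 1) n hfm
      refine ⟨h1, fun k hk1 hk2 => ?_⟩
      rcases eq_or_lt_of_le hk1 with rfl | hk1'
      · exact Bool.eq_false_iff.2 hp
      · exact h2 k hk1' hk2

def eraseStepC (w : List (Fin 3)) : List (Fin 3) :=
  match findMin (sqB w) (w.length + 1) 0 with
  | some n => w.take (w.length - n)
  | none => w

lemma eraseStep_eq_C (w : List (Fin 3)) : eraseStep w = eraseStepC w := by
  unfold eraseStep eraseStepC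
  by_cases h : ∃ n, 0 < n ∧ ∃ u : List (Fin 3), u.length = n ∧ u ++ u <:+ w
  · rw [dif_pos h]
    have hQ : sqB w (Nat.find h) = true := (P_iff_sqB w _).1 (Nat.find_spec h)
    have hlt : Nat.find h < w.length + 1 := by
      obtain ⟨hn, hle, -⟩ := (sqB_iff w _).1 hQ
      omega
    cases hfm : findMin (sqB w) (w.length + 1) 0 with
    | none =>
      exfalso
      have := findMin_none (sqB w) (w.length + 1) 0 hfm (Nat.find h) (Nat.zero_le _)
        (by omega)
      rw [hQ] at this; exact Bool.noConfusion this
    | some m =>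
      obtain ⟨hm, hmin⟩ := findMin_some (sqB w) (w.length + 1) 0 m hfm
      have h1 : Nat.find h ≤ m := Nat.find_min' h ((P_iff_sqB w m).2 hm)
      have h2 : ¬ Nat.find h < m := by
        intro hh
        have := hmin (Nat.find h) (Nat.zero_le _) hh
        rw [hQ] at this; exact Bool.noConfusion this
      have : m = Nat.find h := by omega
      rw [this]
  · rw [dif_neg h]
    cases hfm : findMin (sqB w) (w.length + 1) 0 with
    | none => rfl
    | some m =>
      exfalso
      obtain ⟨hm, -⟩ := findMin_some (sqB w) (w.length + 1) 0 m hfm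
      exact h ⟨m, (P_iff_sqB w m).2 hm⟩

def reduceC (w : List (Fin 3)) : List (Fin 3) := eraseStepC^[w.length] w

lemma reduce_eq_C (w : List (Fin 3)) : reduce w = reduceC w := by
  unfold reduce reduceC
  rw [show (eraseStep : List (Fin 3) → List (Fin 3)) = eraseStepC from
    funext eraseStep_eq_C]

/-! ### Ben's strategy over `Fin 3` -/

def tbl : List (List (Fin 3) × Fin 3) := [
  ([0], 0),
  ([0, 1], 0),
  ([0, 1, 0], 0),
  ([0, 1, 0, 2], 1),
  ([0, 1, 0, 2, 0], 2),
  ([0, 1, 0, 2, 1], 1),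
  ([0, 1, 0, 2, 1, 0], 2),
  ([0, 1, 0, 2, 1, 2], 1),
  ([0, 2], 0),
  ([0, 2, 0], 0),
  ([0, 2, 0, 1], 1),
  ([0, 2, 0, 1, 0], 1),
  ([0, 2, 0, 1, 2], 2),
  ([0, 2, 0, 1, 2, 0], 1),
  ([0, 2, 0, 1, 2, 1], 2),
  ([1], 0),
  ([1, 0], 0),
  ([1, 0, 1], 0),
  ([1, 0, 2], 1),
  ([1, 0, 2, 1], 0),
  ([1, 0, 2, 1, 0], 0),
  ([1, 0, 2, 1, 0, 1], 0),
  ([1, 0, 2, 1, 2], 1),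
  ([2], 0),
  ([2, 0], 0),
  ([2, 0, 1], 1),
  ([2, 0, 1, 0], 1),
  ([2, 0, 1, 2], 0),
  ([2, 0, 1, 2, 0], 0),
  ([2, 0, 1, 2, 0, 2], 0),
  ([2, 0, 2], 0)
]

def phi3 (v : List (Fin 3)) : Fin 3 :=
  ((tbl.find? (fun p => p.1 == v)).map Prod.snd).getD 0

def GoodL : List (List (Fin 3)) := [
  [],
  [0],
  [2, 0],
  [1, 0],
  [0, 1, 0],
  [0, 2, 0],
  [2, 0, 1],
  [0, 2, 0, 1],
  [1, 0, 2, 1],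
  [0, 1, 0, 2],
  [1, 0, 2, 1, 0],
  [2, 0, 1, 2, 0],
  [0, 1, 0, 2, 1],
  [0, 2, 0, 1, 2]
]

theorem key : ∀ w ∈ GoodL, w.length ≤ 6 ∧ ∀ a : Fin 3,
    (reduceC (w ++ [a])).length ≤ 6 ∧
    reduceC (reduceC (w ++ [a]) ++ [phi3 (reduceC (w ++ [a]))]) ∈ GoodL := by
  decide

lemma playER_good (ψ : List (Fin 3) → Fin 3) :
    ∀ m : ℕ, playER ψ phi3 (2 * m) ∈ GoodL := by
  intro m
  induction m with
  | zero => show ([] : List (Fin 3)) ∈ GoodL; decide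
  | succ m ih =>
    have h1 : playER ψ phi3 (2 * m + 1) =
        reduceC (playER ψ phi3 (2 * m) ++ [ψ (playER ψ phi3 (2 * m))]) := by
      rw [playER_succ, if_pos (even_two_mul m), reduce_eq_C]
    have h2 : playER ψ phi3 (2 * (m + 1)) =
        reduceC (playER ψ phi3 (2 * m + 1) ++ [phi3 (playER ψ phi3 (2 * m + 1))]) := by
      have : 2 * (m + 1) = (2 * m + 1) + 1 := by omega
      rw [this, playER_succ, if_neg (by simp [Nat.even_add_one, parity_simps]),
        reduce_eq_C]
    rw [h2, h1]
    exact ((key _ ih).2 (ψ (playER ψ phi3 (2 * m)))).2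

theorem fin3_win : ∀ ψ : List (Fin 3) → Fin 3, ∀ k : ℕ,
    (playER ψ phi3 k).length ≤ 6 := by
  intro ψ k
  rcases Nat.even_or_odd k with ⟨m, rfl⟩ | ⟨m, rfl⟩
  · have : m + m = 2 * m := by omega
    rw [this]
    exact (key _ (playER_good ψ m)).1
  · have h1 : playER ψ phi3 (2 * m + 1) =
        reduceC (playER ψ phi3 (2 * m) ++ [ψ (playER ψ phi3 (2 * m))]) := by
      rw [playER_succ, if_pos (even_two_mul m), reduce_eq_C]
    rw [h1]
    exact ((key _ (playER_good ψ m)).2 (ψ (playER ψ phi3 (2 * m)))).1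

/-- Over an alphabet with exactly 3 letters, Ben has a winning strategy for the
erase-repetition game: there is a Ben strategy `φ` such that against every Ann
strategy `ψ`, every word arising in the play has length at most 6. -/
theorem stmt_14 (A : Type*) [Fintype A] (hA : Fintype.card A = 3) :
    ∃ φ : List A → A, ∀ ψ : List A → A, ∀ k : ℕ,
      (playER ψ φ k).length ≤ 6 := by
  obtain ⟨e⟩ : Nonempty (A ≃ Fin 3) := ⟨Fintype.equivFinOfCardEq hA⟩
  refine ⟨fun w => e.symm (phi3 (w.map e)), fun ψ k => ?_⟩
  have hmap := playER_map e ψ (fun w => e.symm (phi3 (w.map e))) k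
  have hphi : (fun v => e ((fun w => e.symm (phi3 (w.map e))) (v.map e.symm))) = phi3 := by
    funext v
    simp [List.map_map]
  rw [hphi] at hmap
  have := fin3_win (fun v => e (ψ (v.map e.symm))) k
  rw [← hmap, List.length_map] at this
  exact this
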